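/- Let V = ℝⁿ with n = 2N even (N ≥ 1), J an orthogonal complex structure on V, and R an algebraic curvature tensor on V with the Kähler symmetry with respect to J which is Einstein with constant Λ. Define F : V → ℝ by F(v) = R(v, J(v), v, J(v)). Then the Euclidean Laplacian of F satisfies ΔF(v) = 16 Λ ‖v‖² for all v ∈ V. -/

import Mathlib

open MeasureTheory RealInnerProductSpace

noncomputable section

/-- An algebraic curvature tensor on a real inner product space: a 4-linear map
with the usual antisymmetries, pair symmetry and first Bianchi identity. -/
structure AlgCurvatureTensor (E : Type*) [NormedAddCommGroup E] [InnerProductSpace ℝ E] where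
  R : E → E → E → E → ℝ
  add_fst : ∀ x x' y z w, R (x + x') y z w = R x y z w + R x' y z w
  smul_fst : ∀ (c : ℝ) x y z w, R (c • x) y z w = c * R x y z w
  add_snd : ∀ x y y' z w, R x (y + y') z w = R x y z w + R x y' z w
  smul_snd : ∀ (c : ℝ) x y z w, R x (c • y) z w = c * R x y z w
  add_trd : ∀ x y z z' w, R x y (z + z') w = R x y z w + R x y z' w
  smul_trd : ∀ (c : ℝ) x y z w, R x y (c • z) w = c * R x y z w
  add_fth : ∀ x y z w w', R x y z (w + w') = R x y z w + R x y z w'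
  smul_fth : ∀ (c : ℝ) x y z w, R x y z (c • w) = c * R x y z w
  antisymm₁₂ : ∀ x y z w, R x y z w = - R y x z w
  antisymm₃₄ : ∀ x y z w, R x y z w = - R x y w z
  pair_symm : ∀ x y z w, R x y z w = R z w x y
  bianchi : ∀ x y z w, R x y z w + R y z x w + R z x y w = 0

/-- An orthogonal complex structure on a real inner product space:
`J ∘ J = -id` and `J` preserves the inner product. -/
def IsOrthCplxStructure {E : Type*} [NormedAddCommGroup E] [InnerProductSpace ℝ E]
    (J : E →ₗ[ℝ] E) : Prop :=
  (∀ x, J (J x) = -x) ∧ ∀ x y, (inner ℝ (J x) (J y) : ℝ) = inner ℝ x y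

/-- Kähler symmetry of a curvature tensor with respect to a complex structure `J`:
`R(Jx, Jy, z, w) = R(x, y, z, w)`. -/
def AlgCurvatureTensor.IsKaehler {E : Type*} [NormedAddCommGroup E] [InnerProductSpace ℝ E]
    (T : AlgCurvatureTensor E) (J : E →ₗ[ℝ] E) : Prop :=
  ∀ x y z w, T.R (J x) (J y) z w = T.R x y z w

/-- The `i`-th standard basis vector of Euclidean space `ℝⁿ`. -/
def stdBasis (n : ℕ) (i : Fin n) : EuclideanSpace ℝ (Fin n) := EuclideanSpace.single i 1

/-- The scalar curvature of an algebraic curvature tensor on `ℝⁿ`: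
`s = ∑ i ∑ a R(eᵢ, eₐ, eᵢ, eₐ)`. -/
def scalarCurv {n : ℕ} (T : AlgCurvatureTensor (EuclideanSpace ℝ (Fin n))) : ℝ :=
  ∑ i : Fin n, ∑ a : Fin n, T.R (stdBasis n i) (stdBasis n a) (stdBasis n i) (stdBasis n a)

/-- The star-scalar curvature of an algebraic curvature tensor on `ℝⁿ` with respect to `J`:
`s* = ∑ i ∑ a R(eₐ, J eᵢ, eᵢ, J eₐ)`. -/
def starScalarCurv {n : ℕ} (T : AlgCurvatureTensor (EuclideanSpace ℝ (Fin n)))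
    (J : EuclideanSpace ℝ (Fin n) →ₗ[ℝ] EuclideanSpace ℝ (Fin n)) : ℝ :=
  ∑ i : Fin n, ∑ a : Fin n,
    T.R (stdBasis n a) (J (stdBasis n i)) (stdBasis n i) (J (stdBasis n a))

/-- `R` is Einstein with constant `Λ` if `Ric(x,y) = Λ ⟨x,y⟩`. -/
def AlgCurvatureTensor.IsEinstein {n : ℕ}
    (T : AlgCurvatureTensor (EuclideanSpace ℝ (Fin n))) (Λ : ℝ) : Prop :=
  ∀ x y, (∑ a : Fin n, T.R x (stdBasis n a) y (stdBasis n a)) = Λ * (inner ℝ x y : ℝ)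

/-- The canonical surface measure on the unit sphere of Euclidean space,
obtained from the Lebesgue measure. -/
def sphereMeasure (n : ℕ) : Measure (Metric.sphere (0 : EuclideanSpace ℝ (Fin n)) 1) :=
  (volume : Measure (EuclideanSpace ℝ (Fin n))).toSphere

/-- The Euclidean Laplacian `Δf = ∑ i ∂²f/∂xᵢ²`. -/
def eucLaplacian {n : ℕ} (f : EuclideanSpace ℝ (Fin n) → ℝ) (x : EuclideanSpace ℝ (Fin n)) : ℝ :=
  ∑ i : Fin n, fderiv ℝ (fun y => fderiv ℝ f y (stdBasis n i)) x (stdBasis n i)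

/-!
`F(v) = R(v, Jv, v, Jv)` is the diagonal of the quadrilinear form `Q(p) = R(p₀, Jp₁, p₂, Jp₃)`, so
`D²F(x)(e, e)` is the sum, over the twelve ordered pairs of distinct slots, of `Q` with `e` in those
two slots and `x` in the other two. Kähler symmetry and the Bianchi identity collapse these twelve
terms to `12 R(e, Jx, e, Jx) + 4 R(e, x, e, x)`. Summing over an orthonormal basis gives
`12 Ric(Jx, Jx) + 4 Ric(x, x) = 16 Λ ‖x‖²`, because `J` is an isometry.
-/

open Function Finset

theorem MultilinearMap.continuous_of_finiteDimensional {𝕜 ι F : Type*} {E : ι → Type*}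
    [NontriviallyNormedField 𝕜] [CompleteSpace 𝕜] [Fintype ι] [DecidableEq ι]
    [∀ i, NormedAddCommGroup (E i)] [∀ i, NormedSpace 𝕜 (E i)] [∀ i, FiniteDimensional 𝕜 (E i)]
    [TopologicalSpace F] [AddCommMonoid F] [Module 𝕜 F] [ContinuousAdd F] [ContinuousSMul 𝕜 F]
    (f : MultilinearMap 𝕜 E F) : Continuous f := by
  let b i := Module.finBasis 𝕜 (E i)
  have hf : ⇑f = fun m => ∑ r : ∀ i, Fin (Module.finrank 𝕜 (E i)),
      (∏ i, (b i).repr (m i) (r i)) • f fun i => b i (r i) := by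
    funext m
    conv_lhs => rw [← funext fun i => (b i).sum_repr (m i)]
    simp only [MultilinearMap.map_sum, ← MultilinearMap.map_smul_univ]
  rw [hf]
  refine continuous_finsetSum _ fun r _ => (continuous_finsetProd _ fun i _ => ?_).smul
    continuous_const
  exact ((b i).coord (r i)).continuous_of_finiteDimensional.comp (continuous_apply i)

section SecondDerivative

variable {𝕜 ι E F : Type*} [NontriviallyNormedField 𝕜] [Fintype ι] [DecidableEq ι]
  [NormedAddCommGroup E] [NormedSpace 𝕜 E] [NormedAddCommGroup F] [NormedSpace 𝕜 F]
  (f : ContinuousMultilinearMap 𝕜 (fun _ : ι => E) F)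

theorem ContinuousMultilinearMap.fderiv_diag_apply (x v : E) :
    fderiv 𝕜 (fun x => f fun _ => x) x v = ∑ i, f (update (fun _ => x) i v) := by
  have hf : HasFDerivAt (fun x => f fun _ => x) _ x :=
    HasFDerivAt.multilinear_comp f fun _ => hasFDerivAt_id x
  simp [hf.fderiv]

theorem ContinuousMultilinearMap.hasFDerivAt_update_diag (i : ι) (v x : E) :
    HasFDerivAt (fun y => f (update (fun _ => y) i v))
      (∑ j, f.toContinuousLinearMap (update (fun _ => x) i v) j ∘L
        update (fun _ => ContinuousLinearMap.id 𝕜 E) i 0 j) x := by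
  refine HasFDerivAt.multilinear_comp f (g := fun j y => update (fun _ => y) i v j) fun j => ?_
  rcases eq_or_ne j i with rfl | hji
  · simpa using hasFDerivAt_const v x
  · simp only [update_of_ne hji]
    exact hasFDerivAt_id x

theorem ContinuousMultilinearMap.fderiv_fderiv_diag_apply (x v w : E) :
    fderiv 𝕜 (fun y => fderiv 𝕜 (fun x => f fun _ => x) y v) x w =
      ∑ i, ∑ j ∈ univ.erase i, f (update (update (fun _ => x) i v) j w) := by
  simp_rw [f.fderiv_diag_apply]
  rw [(HasFDerivAt.fun_sum (u := univ) fun i _ => f.hasFDerivAt_update_diag i v x).fderiv]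
  rw [_root_.sum_apply]
  refine sum_congr rfl fun i _ => ?_
  rw [_root_.sum_apply, ← add_sum_erase _ _ (mem_univ i)]
  simp only [update_self, ContinuousLinearMap.comp_zero, zero_apply]
  refine (zero_add _).trans (sum_congr rfl fun j hj => ?_)
  simp [update_of_ne (ne_of_mem_erase hj)]

end SecondDerivative

namespace AlgCurvatureTensor

variable {E : Type*} [NormedAddCommGroup E] [InnerProductSpace ℝ E] (T : AlgCurvatureTensor E)

theorem apply_swap_swap (x y z w : E) : T.R y x w z = T.R x y z w := by
  rw [T.antisymm₁₂, T.antisymm₃₄, neg_neg]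

theorem apply_neg_snd (x y z w : E) : T.R x (-y) z w = -T.R x y z w := by
  rw [← neg_one_smul ℝ y, T.smul_snd, neg_one_mul]

theorem apply_neg_fth (x y z w : E) : T.R x y z (-w) = -T.R x y z w := by
  rw [← neg_one_smul ℝ w, T.smul_fth, neg_one_mul]

def toMultilinearMap : MultilinearMap ℝ (fun _ : Fin 4 => E) ℝ where
  toFun p := T.R (p 0) (p 1) (p 2) (p 3)
  map_update_add' := by
    intro _ p i x y
    -- the kernel can check `simp`'s `decide` on slot indices only for the canonical instance
    obtain rfl : ‹DecidableEq (Fin 4)› = instDecidableEqFin 4 := Subsingleton.elim _ _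
    fin_cases i <;> simp [T.add_fst, T.add_snd, T.add_trd, T.add_fth]
  map_update_smul' := by
    intro _ p i c x
    obtain rfl : ‹DecidableEq (Fin 4)› = instDecidableEqFin 4 := Subsingleton.elim _ _
    fin_cases i <;> simp [T.smul_fst, T.smul_snd, T.smul_trd, T.smul_fth]

def holSectCurvForm [FiniteDimensional ℝ E] (J : E →ₗ[ℝ] E) :
    ContinuousMultilinearMap ℝ (fun _ : Fin 4 => E) ℝ where
  toMultilinearMap := T.toMultilinearMap.compLinearMap ![LinearMap.id, J, LinearMap.id, J]
  cont := MultilinearMap.continuous_of_finiteDimensional _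

theorem holSectCurvForm_apply [FiniteDimensional ℝ E] (J : E →ₗ[ℝ] E) (p : Fin 4 → E) :
    T.holSectCurvForm J p = T.R (p 0) (J (p 1)) (p 2) (J (p 3)) := rfl

variable {T} {J : E →ₗ[ℝ] E}

theorem IsKaehler.apply_J_J_right (hK : T.IsKaehler J) (x y z w : E) :
    T.R x y (J z) (J w) = T.R x y z w := by
  rw [T.pair_symm, hK, T.pair_symm]

variable (hJ : ∀ x, J (J x) = -x)
include hJ

theorem IsKaehler.apply_J_snd (hK : T.IsKaehler J) (x y z w : E) :
    T.R x (J y) z w = -T.R (J x) y z w := by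
  rw [← hK x (J y), hJ, T.apply_neg_snd]

theorem IsKaehler.apply_J_fth (hK : T.IsKaehler J) (x y z w : E) :
    T.R x y z (J w) = -T.R x y (J z) w := by
  rw [← hK.apply_J_J_right x y z (J w), hJ, T.apply_neg_fth]

theorem IsKaehler.apply_self_J_self_J (hK : T.IsKaehler J) (x y : E) :
    T.R x (J x) y (J y) = T.R x y x y + T.R x (J y) x (J y) := by
  have h₁ : T.R (J x) y x (J y) = -T.R x (J y) x (J y) := by
    rw [hK.apply_J_snd hJ, neg_neg]
  have h₂ : T.R y x (J x) (J y) = -T.R x y x y := by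
    rw [hK.apply_J_J_right, T.antisymm₁₂]
  linarith [T.bianchi x (J x) y (J y)]

theorem IsKaehler.sum_holSectCurvForm_update_update [FiniteDimensional ℝ E] (hK : T.IsKaehler J)
    (x e : E) :
    ∑ i, ∑ j ∈ univ.erase i,
        T.holSectCurvForm J (update (update (fun _ => x) i e) j e) =
      12 * T.R e (J x) e (J x) + 4 * T.R e x e x := by
  have h₁ := hK.apply_self_J_self_J hJ e x
  have h₂ : T.R x (J x) e (J e) = T.R e (J e) x (J x) := T.pair_symm ..
  have h₃ : T.R e (J x) x (J e) = T.R e (J x) e (J x) := by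
    rw [hK.apply_J_fth hJ, T.antisymm₃₄, neg_neg]
  have h₄ : T.R x (J e) e (J x) = T.R e (J x) x (J e) := T.pair_symm ..
  have h₅ : T.R x (J e) x (J e) = T.R e (J x) e (J x) := by
    rw [hK.apply_J_snd hJ, hK.apply_J_fth hJ, neg_neg, apply_swap_swap]
  simp only [holSectCurvForm_apply, Fin.isValue, mem_univ, sum_erase_eq_sub, Fin.sum_univ_four,
    update_self, ne_eq, one_ne_zero, not_false_eq_true, update_of_ne, Fin.reduceEq, zero_ne_one,
    update_idem, sum_sub_distrib]
  linear_combination 4 * h₁ + 2 * h₂ + 4 * h₃ + 2 * h₄ + 2 * h₅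

end AlgCurvatureTensor

theorem eucLaplacian_diag {ι : Type*} [Fintype ι] [DecidableEq ι] {n : ℕ}
    (f : ContinuousMultilinearMap ℝ (fun _ : ι => EuclideanSpace ℝ (Fin n)) ℝ)
    (x : EuclideanSpace ℝ (Fin n)) :
    eucLaplacian (fun x => f fun _ => x) x = ∑ a, ∑ i, ∑ j ∈ univ.erase i,
      f (update (update (fun _ => x) i (stdBasis n a)) j (stdBasis n a)) := by
  simp only [eucLaplacian, f.fderiv_fderiv_diag_apply]

theorem AlgCurvatureTensor.IsEinstein.sum_apply_stdBasis_self {n : ℕ}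
    {T : AlgCurvatureTensor (EuclideanSpace ℝ (Fin n))} {Λ : ℝ} (hE : T.IsEinstein Λ)
    (y : EuclideanSpace ℝ (Fin n)) :
    ∑ a, T.R (stdBasis n a) y (stdBasis n a) y = Λ * inner ℝ y y :=
  (sum_congr rfl fun a _ => T.apply_swap_swap y (stdBasis n a) y (stdBasis n a)).trans (hE y y)

theorem eucLaplacian_holSectCurv_einstein_general (N : ℕ)
    (J : EuclideanSpace ℝ (Fin (2 * N)) →ₗ[ℝ] EuclideanSpace ℝ (Fin (2 * N)))
    (hJ : IsOrthCplxStructure J)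
    (T : AlgCurvatureTensor (EuclideanSpace ℝ (Fin (2 * N))))
    (hK : T.IsKaehler J) (Λ : ℝ) (hE : T.IsEinstein Λ) :
    ∀ v : EuclideanSpace ℝ (Fin (2 * N)),
      eucLaplacian (fun u => T.R u (J u) u (J u)) v = 16 * Λ * ‖v‖ ^ 2 := by
  intro v
  obtain ⟨hJsq, hJinner⟩ := hJ
  change eucLaplacian (fun u => T.holSectCurvForm J fun _ => u) v = _
  rw [eucLaplacian_diag]
  simp only [hK.sum_holSectCurvForm_update_update hJsq, sum_add_distrib, ← mul_sum,
    hE.sum_apply_stdBasis_self, hJinner, real_inner_self_eq_norm_sq]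
  ring

/-- For a Kähler–Einstein algebraic curvature tensor with Einstein constant
`Λ` on `ℝ^{2N}`, the Euclidean Laplacian of `F(v) = R(v, Jv, v, Jv)` is `16 Λ ‖v‖²`. -/
theorem eucLaplacian_holSectCurv_einstein (N : ℕ) (hN : 1 ≤ N)
    (J : EuclideanSpace ℝ (Fin (2 * N)) →ₗ[ℝ] EuclideanSpace ℝ (Fin (2 * N)))
    (hJ : IsOrthCplxStructure J)
    (T : AlgCurvatureTensor (EuclideanSpace ℝ (Fin (2 * N))))
    (hK : T.IsKaehler J) (Λ : ℝ) (hE : T.IsEinstein Λ) :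
    ∀ v : EuclideanSpace ℝ (Fin (2 * N)),
      eucLaplacian (fun u => T.R u (J u) u (J u)) v = 16 * Λ * ‖v‖ ^ 2 :=
  eucLaplacian_holSectCurv_einstein_general N J hJ T hK Λ hE
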